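/- arXiv:2510.00302 — 2 statements merged into one kernel-verified Lean document; each statement's English description precedes it below -/
import Mathlib

section
/- Let s, E₀, α_X be real numbers with α_X² + E₀²/4 = 1/4 (so that ψ₀ is a pure state). Define the 2×2 complex matrices ψ₀ = (1/2)·I + α_X·X − (E₀/2)·Z and H = −Z, and set V₀ = exp(i s H) · exp(i s ψ₀) · exp(−i s H) and ψ₁ = V₀ · ψ₀ · V₀†. Then the real part of trace(H · ψ₁) equals E₀ − 2·sin²(s)·(1 − E₀²)·((1 − cos s)·E₀ + cos s). -/
set_option maxHeartbeats 2000000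
set_option maxRecDepth 16000

open Matrix Complex

/-- The Pauli X matrix. -/
def PauliX : Matrix (Fin 2) (Fin 2) ℂ := !![0, 1; 1, 0]

/-- The Pauli Y matrix. -/
def PauliY : Matrix (Fin 2) (Fin 2) ℂ := !![0, -Complex.I; Complex.I, 0]

/-- The Pauli Z matrix. -/
def PauliZ : Matrix (Fin 2) (Fin 2) ℂ := !![1, 0; 0, -1]

open Nat in
/-- Exponential of a scalar multiple of an idempotent 2×2 matrix. -/
lemma exp_idem_aux (P : Matrix (Fin 2) (Fin 2) ℂ) (hP : P * P = P) (c : ℂ) :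
    NormedSpace.exp (c • P) = 1 + (Complex.exp c - 1) • P := by
  letI : SeminormedRing (Matrix (Fin 2) (Fin 2) ℂ) := Matrix.linftyOpSemiNormedRing
  letI : NormedRing (Matrix (Fin 2) (Fin 2) ℂ) := Matrix.linftyOpNormedRing
  letI : NormedAlgebra ℂ (Matrix (Fin 2) (Fin 2) ℂ) := Matrix.linftyOpNormedAlgebra
  have hPn : ∀ n : ℕ, P ^ (n + 1) = P := by
    intro n
    induction n with
    | zero => simp
    | succ k ih => rw [pow_succ, ih, hP]
  have hsum : Summable fun n : ℕ => ((n ! : ℂ))⁻¹ • (c • P) ^ n :=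
    NormedSpace.expSeries_summable' (c • P)
  have hterm : ∀ n : ℕ, (((n+1)! : ℂ))⁻¹ • (c • P) ^ (n+1) = (c ^ (n+1) / ((n+1)! : ℂ)) • P := by
    intro n
    rw [smul_pow, hPn, smul_smul, div_eq_mul_inv, mul_comm]
  rw [NormedSpace.exp_eq_tsum ℂ]
  beta_reduce
  rw [Summable.tsum_eq_zero_add hsum]
  simp only [pow_zero, Nat.factorial_zero, Nat.cast_one, inv_one, one_smul]
  congr 1
  have hs2 : Summable fun n : ℕ => c ^ (n+1) / ((n+1)! : ℂ) :=
    (summable_nat_add_iff 1).mpr (NormedSpace.expSeries_div_summable c)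
  calc ∑' n : ℕ, (((n+1)! : ℂ))⁻¹ • (c • P) ^ (n+1)
      = ∑' n : ℕ, (c ^ (n+1) / ((n+1)! : ℂ)) • P := tsum_congr hterm
    _ = (∑' n : ℕ, c ^ (n+1) / ((n+1)! : ℂ)) • P := Summable.tsum_smul_const hs2 P
    _ = (Complex.exp c - 1) • P := by
        congr 1
        have h : Complex.exp c = ∑' n : ℕ, c ^ n / (n ! : ℂ) := by
          rw [Complex.exp_eq_exp_ℂ, NormedSpace.exp_eq_tsum_div]
        rw [h, Summable.tsum_eq_zero_add (NormedSpace.expSeries_div_summable c)]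
        simp

/-- Exponential of a scalar multiple of `-PauliZ`. -/
lemma exp_diag_aux (c : ℂ) :
    NormedSpace.exp (c • (-PauliZ)) = !![Complex.exp (-c), 0; 0, Complex.exp c] := by
  have h : c • (-PauliZ) = Matrix.diagonal ![-c, c] := by
    ext i j
    fin_cases i <;> fin_cases j <;> simp [PauliZ, Matrix.diagonal]
  rw [h, Matrix.exp_diagonal]
  ext i j
  fin_cases i <;> fin_cases j <;>
    simp [Matrix.diagonal, Pi.coe_exp, Complex.exp_eq_exp_ℂ]

theorem dbac_one_step_energy (s E₀ αX : ℝ)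
    (hpure : αX ^ 2 + E₀ ^ 2 / 4 = 1 / 4)
    (ψ₀ : Matrix (Fin 2) (Fin 2) ℂ)
    (hψ₀ : ψ₀ = (1 / 2 : ℂ) • 1 + (αX : ℂ) • PauliX - ((E₀ : ℂ) / 2) • PauliZ)
    (H : Matrix (Fin 2) (Fin 2) ℂ) (hH : H = -PauliZ)
    (V₀ : Matrix (Fin 2) (Fin 2) ℂ)
    (hV₀ : V₀ = NormedSpace.exp ((Complex.I * s) • H) *
        NormedSpace.exp ((Complex.I * s) • ψ₀) *
        NormedSpace.exp ((-(Complex.I * s)) • H))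
    (ψ₁ : Matrix (Fin 2) (Fin 2) ℂ) (hψ₁ : ψ₁ = V₀ * ψ₀ * V₀ᴴ) :
    ((H * ψ₁).trace).re =
      E₀ - 2 * Real.sin s ^ 2 * (1 - E₀ ^ 2) *
        ((1 - Real.cos s) * E₀ + Real.cos s) := by
  have hpc : (αX : ℂ) ^ 2 = 1 / 4 - (E₀ : ℂ) ^ 2 / 4 := by
    have h : (αX ^ 2 : ℝ) = 1 / 4 - E₀ ^ 2 / 4 := by linarith
    have h2 := congrArg (Complex.ofReal) h
    push_cast at h2
    exact h2
  have hproj : ψ₀ * ψ₀ = ψ₀ := by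
    rw [hψ₀]
    ext i j
    fin_cases i <;> fin_cases j <;>
      simp [PauliX, PauliZ, Matrix.mul_apply, Fin.sum_univ_two, Matrix.smul_apply,
        Matrix.add_apply, Matrix.sub_apply, Matrix.one_apply] <;>
      ring_nf <;> linear_combination hpc
  have he : Complex.exp (Complex.I * (s : ℂ)) =
      (Real.cos s : ℂ) + (Real.sin s : ℂ) * Complex.I := by
    rw [mul_comm, Complex.exp_mul_I, ← Complex.ofReal_cos, ← Complex.ofReal_sin]
  have heb : Complex.exp (-(Complex.I * (s : ℂ))) =
      (Real.cos s : ℂ) - (Real.sin s : ℂ) * Complex.I := by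
    have h : -(Complex.I * (s : ℂ)) = ((-s : ℝ) : ℂ) * Complex.I := by push_cast; ring
    rw [h, Complex.exp_mul_I, ← Complex.ofReal_cos, ← Complex.ofReal_sin]
    push_cast [Real.cos_neg, Real.sin_neg]
    ring
  have hV : V₀ = !![Complex.exp (-(Complex.I * (s : ℂ))), 0; 0, Complex.exp (Complex.I * (s : ℂ))] *
      (1 + (Complex.exp (Complex.I * (s : ℂ)) - 1) • ψ₀) *
      !![Complex.exp (Complex.I * (s : ℂ)), 0; 0, Complex.exp (-(Complex.I * (s : ℂ)))] := by
    rw [hV₀, hH, exp_diag_aux, exp_diag_aux, exp_idem_aux ψ₀ hproj, neg_neg]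
  have hI : Complex.I ^ 2 = -1 := Complex.I_sq
  have hsc : (Real.sin s : ℂ) ^ 2 + (Real.cos s : ℂ) ^ 2 = 1 := by
    exact_mod_cast congrArg Complex.ofReal (Real.sin_sq_add_cos_sq s)
  suffices hsuff : (H * ψ₁).trace =
      ((E₀ - 2 * Real.sin s ^ 2 * (1 - E₀ ^ 2) *
        ((1 - Real.cos s) * E₀ + Real.cos s) : ℝ) : ℂ) by
    rw [hsuff, Complex.ofReal_re]
  rw [hψ₁, hV, hψ₀, hH, he, heb]
  simp only [Matrix.trace_fin_two, Matrix.mul_apply, Fin.sum_univ_two,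
    Matrix.conjTranspose_apply, Matrix.smul_apply, Matrix.add_apply, Matrix.sub_apply,
    Matrix.one_apply, Matrix.neg_apply, PauliX, PauliZ, Matrix.cons_val', Matrix.cons_val_zero,
    Matrix.cons_val_one, Matrix.head_cons, Matrix.empty_val', Matrix.cons_val_fin_one,
    Matrix.head_fin_const, Matrix.of_apply, smul_eq_mul, star_add, star_sub, star_mul',
    star_one, star_zero, Complex.star_def, map_add, map_sub, _root_.map_neg, _root_.map_mul, _root_.map_one, map_zero,
    Complex.conj_ofReal, Complex.conj_I, map_div₀, map_ofNat, Fin.isValue, ite_true, ite_false,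
    one_ne_zero, zero_ne_one, if_true, if_false, reduceIte]
  push_cast [-Complex.ofReal_sin, -Complex.ofReal_cos]
  linear_combination ((1/4)*(Real.sin s : ℂ)^4*(E₀ : ℂ) + (-1/4)*(Real.sin s : ℂ)^4*(E₀ : ℂ)^3 + (3)*(Real.sin s : ℂ)^4*(αX : ℂ)^2*(E₀ : ℂ) + (-3/4)*(Real.sin s : ℂ)^6*(E₀ : ℂ) + (-1/4)*(Real.sin s : ℂ)^6*(E₀ : ℂ)^3 + (3)*(Real.sin s : ℂ)^6*(αX : ℂ)^2*(E₀ : ℂ) + (-1/2)*(Real.cos s : ℂ)*(Real.sin s : ℂ)^4*(E₀ : ℂ) + (1/2)*(Real.cos s : ℂ)*(Real.sin s : ℂ)^4*(E₀ : ℂ)^3 + (8)*(Real.cos s : ℂ)*(Real.sin s : ℂ)^4*(αX : ℂ)^2 + (-6)*(Real.cos s : ℂ)*(Real.sin s : ℂ)^4*(αX : ℂ)^2*(E₀ : ℂ) + (1/2)*(Real.cos s : ℂ)^2*(Real.sin s : ℂ)^2*(E₀ : ℂ) + (-1/2)*(Real.cos s : ℂ)^2*(Real.sin s : ℂ)^2*(E₀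 : ℂ)^3 + (2)*(Real.cos s : ℂ)^2*(Real.sin s : ℂ)^2*(αX : ℂ)^2*(E₀ : ℂ) + (-9/4)*(Real.cos s : ℂ)^2*(Real.sin s : ℂ)^4*(E₀ : ℂ) + (-3/4)*(Real.cos s : ℂ)^2*(Real.sin s : ℂ)^4*(E₀ : ℂ)^3 + (5)*(Real.cos s : ℂ)^2*(Real.sin s : ℂ)^4*(αX : ℂ)^2*(E₀ : ℂ) + (-1)*(Real.cos s : ℂ)^3*(Real.sin s : ℂ)^2*(E₀ : ℂ) + (Real.cos s : ℂ)^3*(Real.sin s : ℂ)^2*(E₀ : ℂ)^3 + (8)*(Real.cos s : ℂ)^3*(Real.sin s : ℂ)^2*(αX : ℂ)^2 + (-4)*(Real.cos s : ℂ)^3*(Real.sin s : ℂ)^2*(αX : ℂ)^2*(E₀ : ℂ) + (-9/4)*(Real.cos s : ℂ)^4*(Real.sin s : ℂ)^2*(E₀ : ℂ) + (-3/4)*(Real.cos s : ℂ)^4*(Real.sin s : ℂ)^2*(E₀ : ℂ)^3 + (Real.cos s : ℂ)^4*(Real.sin s : ℂ)^2*(αX : ℂ)^2*(E₀ : ℂ)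 + (-1/4)*Complex.I^2*(Real.sin s : ℂ)^4*(E₀ : ℂ) + (1/4)*Complex.I^2*(Real.sin s : ℂ)^4*(E₀ : ℂ)^3 + (-3)*Complex.I^2*(Real.sin s : ℂ)^4*(αX : ℂ)^2*(E₀ : ℂ) + (3/4)*Complex.I^2*(Real.sin s : ℂ)^6*(E₀ : ℂ) + (1/4)*Complex.I^2*(Real.sin s : ℂ)^6*(E₀ : ℂ)^3 + (-3)*Complex.I^2*(Real.sin s : ℂ)^6*(αX : ℂ)^2*(E₀ : ℂ) + (1/2)*Complex.I^2*(Real.cos s : ℂ)*(Real.sin s : ℂ)^4*(E₀ : ℂ) + (-1/2)*Complex.I^2*(Real.cos s : ℂ)*(Real.sin s : ℂ)^4*(E₀ : ℂ)^3 + (-8)*Complex.I^2*(Real.cos s : ℂ)*(Real.sin s : ℂ)^4*(αX : ℂ)^2 + (6)*Complex.I^2*(Real.cos s : ℂ)*(Real.sin s : ℂ)^4*(αX : ℂ)^2*(E₀ : ℂ) + (9/4)*Complex.I^2*(Real.cos s : ℂ)^2*(Real.sin s : ℂ)^4*(E₀ : ℂ) + (3/4)*Complex.I^2*(Real.cos s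 : ℂ)^2*(Real.sin s : ℂ)^4*(E₀ : ℂ)^3 + (-5)*Complex.I^2*(Real.cos s : ℂ)^2*(Real.sin s : ℂ)^4*(αX : ℂ)^2*(E₀ : ℂ) + (-3/4)*Complex.I^4*(Real.sin s : ℂ)^6*(E₀ : ℂ) + (-1/4)*Complex.I^4*(Real.sin s : ℂ)^6*(E₀ : ℂ)^3 + (3)*Complex.I^4*(Real.sin s : ℂ)^6*(αX : ℂ)^2*(E₀ : ℂ)) * hI + ((-3)*(Real.sin s : ℂ)^4*(E₀ : ℂ) + (-3)*(Real.sin s : ℂ)^6*(E₀ : ℂ) + (-8)*(Real.cos s : ℂ)*(Real.sin s : ℂ)^4 + (6)*(Real.cos s : ℂ)*(Real.sin s : ℂ)^4*(E₀ : ℂ) + (-2)*(Real.cos s : ℂ)^2*(Real.sin s : ℂ)^2*(E₀ : ℂ) + (-5)*(Real.cos s : ℂ)^2*(Real.sin s : ℂ)^4*(E₀ : ℂ) + (-8)*(Real.cos s : ℂ)^3*(Real.sin s : ℂ)^2 + (4)*(Real.cos s : ℂ)^3*(Real.sin s : ℂ)^2*(E₀ : ℂ) + (Real.cos s : ℂ)^4*(E₀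 : ℂ) + (-1)*(Real.cos s : ℂ)^4*(Real.sin s : ℂ)^2*(E₀ : ℂ) + (-2)*(Real.cos s : ℂ)^5*(E₀ : ℂ) + (Real.cos s : ℂ)^6*(E₀ : ℂ)) * hpc + ((E₀ : ℂ) + (-1)*(Real.sin s : ℂ)^2*(E₀ : ℂ) + (2)*(Real.sin s : ℂ)^2*(E₀ : ℂ)^3 + (Real.sin s : ℂ)^4*(E₀ : ℂ)^3 + (-2)*(Real.cos s : ℂ)*(Real.sin s : ℂ)^2 + (2)*(Real.cos s : ℂ)*(Real.sin s : ℂ)^2*(E₀ : ℂ) + (2)*(Real.cos s : ℂ)*(Real.sin s : ℂ)^2*(E₀ : ℂ)^2 + (-2)*(Real.cos s : ℂ)*(Real.sin s : ℂ)^2*(E₀ : ℂ)^3 + (Real.cos s : ℂ)^2*(E₀ : ℂ) + (Real.cos s : ℂ)^2*(Real.sin s : ℂ)^2*(E₀ : ℂ) + (Real.cos s : ℂ)^2*(Real.sin s : ℂ)^2*(E₀ : ℂ)^3 + (Real.cos s : ℂ)^4*(E₀ : ℂ)) * hsc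
end

section
/- Let σ and ρ be 2×2 complex matrices with trace(ρ) = 1 and trace(σ) = 1, and let δ be a real number. Then the partial trace over the second tensor factor of exp(−i δ · SWAP) · (σ ⊗ ρ) · exp(i δ · SWAP) equals cos²(δ)·σ + i·cos(δ)·sin(δ)·(σ·ρ − ρ·σ) + sin²(δ)·ρ. (This is the exact density-matrix exponentiation (DME) channel identity.) -/
set_option maxRecDepth 8000
set_option maxHeartbeats 1600000


open Matrix Complex Kronecker

/-- The two-qubit SWAP matrix. -/
def SWAP : Matrix (Fin 2 × Fin 2) (Fin 2 × Fin 2) ℂ :=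
  fun p q => if p.1 = q.2 ∧ p.2 = q.1 then 1 else 0

namespace DMEaux

def idx : Fin 2 × Fin 2 → Fin 4 := fun p => ![![0, 1], ![2, 3]] p.1 p.2

noncomputable def U : Matrix (Fin 2 × Fin 2) (Fin 2 × Fin 2) ℂ := Matrix.of fun p q =>
  (!![1,0,0,0; 0,1,1,0; 0,1,-1,0; 0,0,0,1] : Matrix (Fin 4) (Fin 4) ℂ) (idx p) (idx q)

noncomputable def V : Matrix (Fin 2 × Fin 2) (Fin 2 × Fin 2) ℂ := Matrix.of fun p q =>
  (!![1,0,0,0; 0,1/2,1/2,0; 0,1/2,-(1/2),0; 0,0,0,1] : Matrix (Fin 4) (Fin 4) ℂ) (idx p) (idx q)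

def d : Fin 2 × Fin 2 → ℂ := fun p => if p = (1, 0) then -1 else 1

lemma hUV : U * V = 1 := by
  ext ⟨a, b⟩ ⟨c, e⟩
  fin_cases a <;> fin_cases b <;> fin_cases c <;> fin_cases e <;>
    simp [U, V, idx, Matrix.mul_apply, Fintype.sum_prod_type, Fin.sum_univ_two,
      Matrix.one_apply, Prod.ext_iff, Matrix.vecHead, Matrix.vecTail] <;> norm_num

lemma hVU : V * U = 1 := by
  ext ⟨a, b⟩ ⟨c, e⟩
  fin_cases a <;> fin_cases b <;> fin_cases c <;> fin_cases e <;>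
    simp [U, V, idx, Matrix.mul_apply, Fintype.sum_prod_type, Fin.sum_univ_two,
      Matrix.one_apply, Prod.ext_iff, Matrix.vecHead, Matrix.vecTail] <;> norm_num

noncomputable def Uu : (Matrix (Fin 2 × Fin 2) (Fin 2 × Fin 2) ℂ)ˣ := ⟨U, V, hUV, hVU⟩

lemma exp_smul_swap (z : ℂ) :
    NormedSpace.exp (z • SWAP) =
      Complex.cosh z • (1 : Matrix (Fin 2 × Fin 2) (Fin 2 × Fin 2) ℂ) +
        Complex.sinh z • SWAP := by
  have h1 : z • SWAP =
      (Uu : Matrix (Fin 2 × Fin 2) (Fin 2 × Fin 2) ℂ) * (Matrix.diagonal fun p => z * d p) *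
        ((Uu⁻¹ : _ˣ) : Matrix (Fin 2 × Fin 2) (Fin 2 × Fin 2) ℂ) := by
    ext ⟨a, b⟩ ⟨c, e⟩
    rw [show (Uu : Matrix (Fin 2 × Fin 2) (Fin 2 × Fin 2) ℂ) = U from rfl,
      show ((Uu⁻¹ : (Matrix (Fin 2 × Fin 2) (Fin 2 × Fin 2) ℂ)ˣ) :
        Matrix (Fin 2 × Fin 2) (Fin 2 × Fin 2) ℂ) = V from rfl]
    fin_cases a <;> fin_cases b <;> fin_cases c <;> fin_cases e <;>
      simp [U, V, d, idx, SWAP, Matrix.mul_apply, Fintype.sum_prod_type,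
        Fin.sum_univ_two, Matrix.diagonal, Prod.ext_iff, Matrix.vecHead, Matrix.vecTail] <;> ring
  have hUc : (Uu : Matrix (Fin 2 × Fin 2) (Fin 2 × Fin 2) ℂ) = U := rfl
  have hUc' : ((Uu⁻¹ : (Matrix (Fin 2 × Fin 2) (Fin 2 × Fin 2) ℂ)ˣ) :
      Matrix (Fin 2 × Fin 2) (Fin 2 × Fin 2) ℂ) = V := rfl
  rw [h1, Matrix.exp_units_conj, Matrix.exp_diagonal, hUc, hUc']
  have hd : (NormedSpace.exp fun p : Fin 2 × Fin 2 => z * d p) =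
      fun p => if p = (1, 0) then Complex.cosh z - Complex.sinh z
        else Complex.cosh z + Complex.sinh z := by
    funext p
    rw [Pi.coe_exp, ← Complex.exp_eq_exp_ℂ]
    unfold d
    split_ifs
    · rw [mul_neg_one]; exact (Complex.cosh_sub_sinh z).symm
    · rw [mul_one]; exact (Complex.cosh_add_sinh z).symm
  rw [hd]
  ext ⟨a, b⟩ ⟨c, e⟩
  fin_cases a <;> fin_cases b <;> fin_cases c <;> fin_cases e <;>
    simp [U, V, idx, SWAP, Matrix.mul_apply, Fintype.sum_prod_type,
      Fin.sum_univ_two, Matrix.diagonal, Matrix.one_apply,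
      Prod.ext_iff, Matrix.vecHead, Matrix.vecTail] <;>
    first
      | ring1
      | linear_combination (-(Complex.cosh_add_sinh z)) / 2 - (Complex.cosh_sub_sinh z) / 2
      | linear_combination (-(Complex.cosh_add_sinh z)) / 2 + (Complex.cosh_sub_sinh z) / 2

end DMEaux

theorem dme_channel_exact (σ ρ : Matrix (Fin 2) (Fin 2) ℂ)
    (hρ : ρ.trace = 1) (hσ : σ.trace = 1) (δ : ℝ) (i j : Fin 2) :
    ∑ k : Fin 2,
        (NormedSpace.exp ((-(Complex.I * δ)) • SWAP) * (σ ⊗ₖ ρ) *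
          NormedSpace.exp ((Complex.I * δ) • SWAP)) (i, k) (j, k) =
      ((Real.cos δ : ℂ) ^ 2 • σ +
        (Complex.I * Real.cos δ * Real.sin δ) • (σ * ρ - ρ * σ) +
        (Real.sin δ : ℂ) ^ 2 • ρ) i j := by
  have hE1 : NormedSpace.exp ((-(Complex.I * (δ : ℂ))) • SWAP) =
      (Real.cos δ : ℂ) • (1 : Matrix (Fin 2 × Fin 2) (Fin 2 × Fin 2) ℂ) +
        (-((Real.sin δ : ℂ) * Complex.I)) • SWAP := by
    rw [DMEaux.exp_smul_swap, Complex.cosh_neg, Complex.sinh_neg, mul_comm Complex.I (δ : ℂ),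
      Complex.cosh_mul_I, Complex.sinh_mul_I, ← Complex.ofReal_cos, ← Complex.ofReal_sin]
  have hE2 : NormedSpace.exp ((Complex.I * (δ : ℂ)) • SWAP) =
      (Real.cos δ : ℂ) • (1 : Matrix (Fin 2 × Fin 2) (Fin 2 × Fin 2) ℂ) +
        ((Real.sin δ : ℂ) * Complex.I) • SWAP := by
    rw [DMEaux.exp_smul_swap, mul_comm Complex.I (δ : ℂ),
      Complex.cosh_mul_I, Complex.sinh_mul_I, ← Complex.ofReal_cos, ← Complex.ofReal_sin]
  rw [Matrix.trace_fin_two] at hρ hσ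
  rw [hE1, hE2]
  fin_cases i <;> fin_cases j <;>
    simp only [Matrix.mul_apply, Matrix.add_apply, Matrix.sub_apply, Matrix.smul_apply,
      Matrix.one_apply, Matrix.kroneckerMap_apply, SWAP, Fintype.sum_prod_type,
      Fin.sum_univ_two, smul_eq_mul] <;>
    simp [Prod.ext_iff, ← Complex.ofReal_cos, ← Complex.ofReal_sin]
  · linear_combination (Real.cos δ : ℂ) ^ 2 * σ 0 0 * hρ -
      Complex.I * Complex.I * (Real.sin δ : ℂ) ^ 2 * ρ 0 0 * hσ -
      (Real.sin δ : ℂ) ^ 2 * ρ 0 0 * Complex.I_mul_I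
  · linear_combination (Real.cos δ : ℂ) ^ 2 * σ 0 1 * hρ -
      Complex.I * Complex.I * (Real.sin δ : ℂ) ^ 2 * ρ 0 1 * hσ -
      (Real.sin δ : ℂ) ^ 2 * ρ 0 1 * Complex.I_mul_I
  · linear_combination (Real.cos δ : ℂ) ^ 2 * σ 1 0 * hρ -
      Complex.I * Complex.I * (Real.sin δ : ℂ) ^ 2 * ρ 1 0 * hσ -
      (Real.sin δ : ℂ) ^ 2 * ρ 1 0 * Complex.I_mul_I
  · linear_combination (Real.cos δ : ℂ) ^ 2 * σ 1 1 * hρ -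
      Complex.I * Complex.I * (Real.sin δ : ℂ) ^ 2 * ρ 1 1 * hσ -
      (Real.sin δ : ℂ) ^ 2 * ρ 1 1 * Complex.I_mul_I
end
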